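/- Let σ : {0,1}^ℕ → {0,1}^ℕ be the flip involution (σx)(n) = 1 − x(n), and let X ⊆ {0,1}^ℕ be a subshift with σ(X) = X whose ergodic T-invariant Borel probability measures supported on X are exactly two measures μ′ and μ″ with μ″ = σ_*μ′ and μ′ ≠ μ″. Then for every function assigning to each β > 0 an equilibrium state μ_β for βφ_X satisfying σ_*μ_β = μ_β, we have μ_β → ½μ′ + ½μ″ in the weak-* topology as β → +∞. -/

import Mathlib

open MeasureTheory Filter Topology
open scoped ENNReal Classical

noncomputable section

/-- The configuration space `{0,1}^ℕ` (with `false = 0`, `true = 1`). -/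
abbrev Conf : Type := ℕ → Bool

/-- The shift map `(Tx)(n) = x(n+1)`. -/
def shiftMap (x : Conf) : Conf := fun n => x (n + 1)

/-- The metric `d(x,y) = 2^{-min{n : x n ≠ y n}}` for `x ≠ y`, and `d(x,x) = 0`. -/
def dist01 (x y : Conf) : ℝ :=
  if x = y then 0 else ((2 : ℝ) ^ sInf {n : ℕ | x n ≠ y n})⁻¹

/-- A subshift: a nonempty, closed, shift-invariant subset of `{0,1}^ℕ`. -/
def IsSubshift (X : Set Conf) : Prop :=
  X.Nonempty ∧ IsClosed X ∧ ∀ x ∈ X, shiftMap x ∈ X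

/-- The potential `φ_X(y) = -d(y, X) = -inf {d(y,x) : x ∈ X}`. -/
def phiX (X : Set Conf) (y : Conf) : ℝ := -sInf (dist01 y '' X)

/-- The cylinder set of points whose first `n` symbols form the word `w`. -/
def cylinder {n : ℕ} (w : Fin n → Bool) : Set Conf := {x | ∀ i : Fin n, x i = w i}

/-- The entropy `H_n(μ)` of the `n`-block marginal of `μ` (base-2 logarithm). -/
def Hblock (μ : Measure Conf) (n : ℕ) : ℝ :=
  -∑ w : Fin n → Bool, (μ (cylinder w)).toReal * Real.logb 2 (μ (cylinder w)).toReal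

/-- The Kolmogorov–Sinai entropy `h(μ) = lim_n H_n(μ)/n`; since the limit exists
(by subadditivity) for shift-invariant measures, we may define it as a `limsup`. -/
def entropy (μ : Measure Conf) : ℝ :=
  limsup (fun n : ℕ => Hblock μ n / n) atTop

/-- A shift-invariant Borel probability measure. -/
def IsInvProb (μ : Measure Conf) : Prop :=
  IsProbabilityMeasure μ ∧ μ.map shiftMap = μ

/-- An equilibrium state for `βφ`: a shift-invariant Borel probability measure maximizing
`ν ↦ β∫φ dν + h(ν)` over all shift-invariant Borel probability measures. -/
def IsEquilibriumState (φ : Conf → ℝ) (β : ℝ) (μ : Measure Conf) : Prop :=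
  IsInvProb μ ∧ ∀ ν : Measure Conf, IsInvProb ν →
    β * ∫ x, φ x ∂ν + entropy ν ≤ β * ∫ x, φ x ∂μ + entropy μ

/-- Ergodicity: every shift-invariant Borel set has measure `0` or `1`. -/
def IsErgodicMeasure (μ : Measure Conf) : Prop :=
  ∀ s : Set Conf, MeasurableSet s → shiftMap ⁻¹' s = s → μ s = 0 ∨ μ s = 1

/-- The flip involution `(σx)(n) = 1 - x(n)` of `{0,1}^ℕ`. -/
def flip01 (x : Conf) : Conf := fun n => !(x n)

/-!
Since `0 ≤ h ≤ 1` and `φ_X` vanishes exactly on `X`, comparing `μ_β` with `μ'` in the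
variational principle gives `-1/β ≤ ∫ φ_X dμ_β ≤ 0`. Hence every weak-* limit point of `μ_β` is a
shift-invariant, flip-symmetric probability measure carried by `X`.

Through `ν ↦ (f ↦ ∫ f dν)` the invariant measures carried by `X` form a compact convex subset of
`C(Conf, ℝ) → ℝ`. Its extreme points are ergodic, hence equal to `μ'` or `μ''`, so by
Krein–Milman every invariant measure on `X` is `a μ' + b μ''`. Flip symmetry swaps `μ'` and
`μ''`, which forces `a = b = 1/2`. Since the space of probability measures is compact, the unique
limit point is then the limit.
-/

lemma isClosed_setOf_forall_comp_eq {α : Type*} [TopologicalSpace α] (T : C(α, α)) :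
    IsClosed {L : C(α, ℝ) → ℝ | ∀ f, L (f.comp T) = L f} := by
  simp only [Set.ofPred_forall]
  exact isClosed_iInter fun f => isClosed_eq (continuous_apply _) (continuous_apply _)

lemma MapClusterPt.mem_of_isClosed {X Y : Type*} [TopologicalSpace X] {x : X} {F : Filter Y}
    {u : Y → X} {C : Set X} (h : MapClusterPt x F u) (hC : IsClosed C)
    (hu : ∀ᶠ a in F, u a ∈ C) : x ∈ C := by
  by_contra hx
  obtain ⟨a, hna, ha⟩ := ((h.frequently (hC.isOpen_compl.mem_nhds hx)).and_eventually hu).exists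
  exact hna ha

lemma MapClusterPt.eq_of_tendsto {X Y : Type*} [TopologicalSpace X] [T2Space X] {x y : X}
    {F : Filter Y} {u : Y → X} (h : MapClusterPt x F u) (hu : Tendsto u F (𝓝 y)) : x = y := by
  by_contra hxy
  exact h.neBot.ne ((disjoint_nhds_nhds.2 hxy).mono_right hu).eq_bot

section IntegralFunctional

variable {α : Type*} [TopologicalSpace α] [MeasurableSpace α]

def integralFunctional (ν : Measure α) (f : C(α, ℝ)) : ℝ := ∫ x, f x ∂ν

lemma integralFunctional_smul (c : ℝ≥0∞) (ν : Measure α) :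
    integralFunctional (c • ν) = c.toReal • integralFunctional ν := by
  ext f
  exact integral_smul_measure _ c

lemma integralFunctional_add [CompactSpace α] [OpensMeasurableSpace α]
    (ν₁ ν₂ : Measure α) [IsFiniteMeasure ν₁] [IsFiniteMeasure ν₂] :
    integralFunctional (ν₁ + ν₂) = integralFunctional ν₁ + integralFunctional ν₂ := by
  ext f
  exact integral_add_measure ((BoundedContinuousFunction.mkOfCompact f).integrable ν₁)
    ((BoundedContinuousFunction.mkOfCompact f).integrable ν₂)

lemma integralFunctional_map [BorelSpace α] (ν : Measure α) (T : C(α, α))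
    (f : C(α, ℝ)) : integralFunctional (ν.map T) f = integralFunctional ν (f.comp T) :=
  integral_map T.continuous.aemeasurable f.continuous.aestronglyMeasurable

lemma isCompact_range_integralFunctional [CompactSpace α] [T2Space α] [BorelSpace α] :
    IsCompact (Set.range fun ν : ProbabilityMeasure α => integralFunctional (ν : Measure α)) :=
  isCompact_range <| continuous_pi fun f => ProbabilityMeasure.continuous_integral_continuousMap f

variable [HasOuterApproxClosed α] [BorelSpace α]

lemma integralFunctional_inj {μ ν : Measure α} [IsFiniteMeasure μ] [IsFiniteMeasure ν] :
    integralFunctional μ = integralFunctional ν ↔ μ = ν :=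
  ⟨fun h => ext_of_forall_integral_eq_of_IsFiniteMeasure fun f => congrFun h f.toContinuousMap,
    congrArg _⟩

lemma map_eq_self_iff_integralFunctional_comp (ν : Measure α) [IsFiniteMeasure ν] (T : C(α, α)) :
    ν.map T = ν ↔ ∀ f, integralFunctional ν (f.comp T) = integralFunctional ν f := by
  simp only [← integralFunctional_map, ← funext_iff, integralFunctional_inj]

end IntegralFunctional

lemma continuous_shiftMap : Continuous shiftMap :=
  continuous_pi fun n => continuous_apply (n + 1)

lemma continuous_flip01 : Continuous flip01 :=
  continuous_pi fun n => continuous_of_discreteTopology.comp (continuous_apply n)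

def shiftMapCM : C(Conf, Conf) := ⟨shiftMap, continuous_shiftMap⟩

def flip01CM : C(Conf, Conf) := ⟨flip01, continuous_flip01⟩

section UltrametricDistance

-- Not `PiNat.metricSpace`: its uniformity would differ from the product uniformity over `Bool`.
abbrev confMetricSpace : MetricSpace Conf :=
  PiNat.metricSpaceOfDiscreteUniformity fun _ => bot_uniformity

attribute [local instance] confMetricSpace

lemma dist01_eq_dist (x y : Conf) : dist01 x y = dist x y := by
  by_cases h : x = y
  · simp [dist01, h]
  have hne : {n | x n ≠ y n}.Nonempty := Function.ne_iff.1 h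
  have hfirst : sInf {n | x n ≠ y n} = PiNat.firstDiff x y := by
    refine le_antisymm (Nat.sInf_le (PiNat.apply_firstDiff_ne h)) (not_lt.1 fun hlt => ?_)
    exact Nat.sInf_mem hne (PiNat.apply_eq_of_lt_firstDiff hlt)
  have hdist : dist x y = (1 / 2 : ℝ) ^ PiNat.firstDiff x y := PiNat.dist_eq_of_ne h
  rw [dist01, if_neg h, hdist, hfirst, one_div, inv_pow]

lemma phiX_eq_neg_infDist (X : Set Conf) (y : Conf) : phiX X y = -Metric.infDist y X := by
  simp only [phiX, dist01_eq_dist, Metric.infDist_eq_iInf, sInf_image']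

lemma continuous_phiX (X : Set Conf) : Continuous (phiX X) := by
  simp only [funext (phiX_eq_neg_infDist X)]
  exact (Metric.continuous_infDist_pt X).neg

lemma phiX_nonpos (X : Set Conf) (y : Conf) : phiX X y ≤ 0 := by
  simpa [phiX_eq_neg_infDist] using Metric.infDist_nonneg

lemma phiX_eq_zero_iff {X : Set Conf} (hcl : IsClosed X) (hne : X.Nonempty) {y : Conf} :
    phiX X y = 0 ↔ y ∈ X := by
  rw [phiX_eq_neg_infDist, neg_eq_zero, hcl.mem_iff_infDist_zero hne]

end UltrametricDistance

def phiXCM (X : Set Conf) : C(Conf, ℝ) := ⟨phiX X, continuous_phiX X⟩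

lemma integral_phiX_eq_zero_iff {X : Set Conf} (hcl : IsClosed X) (hne : X.Nonempty)
    (ν : Measure Conf) [IsProbabilityMeasure ν] : ∫ y, phiX X y ∂ν = 0 ↔ ν X = 1 := by
  have h := integral_eq_zero_iff_of_nonneg (fun y => neg_nonneg.2 (phiX_nonpos X y))
    ((BoundedContinuousFunction.mkOfCompact (phiXCM X)).integrable ν).neg
  rw [integral_neg, neg_eq_zero] at h
  rw [h, ← prob_compl_eq_zero_iff hcl.measurableSet, ← mem_ae_iff]
  exact Filter.eventually_congr (.of_forall fun y => neg_eq_zero.trans (phiX_eq_zero_iff hcl hne))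

lemma sum_negMulLog_le_log_card {ι : Type*} [Fintype ι] {p : ι → ℝ} (hp0 : ∀ i, 0 ≤ p i)
    (hp1 : ∑ i, p i = 1) : ∑ i, Real.negMulLog (p i) ≤ Real.log (Fintype.card ι) := by
  have hι : Nonempty ι := by
    by_contra h
    simp [not_nonempty_iff.1 h] at hp1
  have hN : (0 : ℝ) < Fintype.card ι := by exact_mod_cast Fintype.card_pos
  have jensen := Real.concaveOn_negMulLog.le_map_sum (t := Finset.univ)
    (w := fun _ => (Fintype.card ι : ℝ)⁻¹) (p := p) (fun _ _ => by positivity)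
    (by simp [hN.ne']) (fun i _ => hp0 i)
  simp only [smul_eq_mul, ← Finset.mul_sum, hp1, mul_one, Real.negMulLog, Real.log_inv,
    neg_mul_neg] at jensen
  exact le_of_mul_le_mul_left jensen (inv_pos.2 hN)

lemma cylinder_eq_preimage {n : ℕ} (w : Fin n → Bool) :
    cylinder w = (fun x : Conf => fun i : Fin n => x i) ⁻¹' {w} := by
  ext x
  simp [_root_.cylinder, funext_iff]

lemma sum_measureReal_cylinder (μ : Measure Conf) [IsProbabilityMeasure μ] (n : ℕ) :
    ∑ w : Fin n → Bool, μ.real (cylinder w) = 1 := by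
  have hπ : Measurable fun x : Conf => fun i : Fin n => x i :=
    measurable_pi_lambda _ fun i => measurable_pi_apply _
  simp only [cylinder_eq_preimage]
  rw [sum_measureReal_preimage_singleton _ fun w _ => hπ (measurableSet_singleton w),
    Finset.coe_univ, Set.preimage_univ, probReal_univ]

lemma Hblock_eq_sum_negMulLog (μ : Measure Conf) (n : ℕ) :
    Hblock μ n = (∑ w : Fin n → Bool, Real.negMulLog (μ.real (cylinder w))) / Real.log 2 := by
  simp only [Hblock, Real.logb, Real.negMulLog, Finset.sum_div, ← Finset.sum_neg_distrib,
    measureReal_def]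
  congr 1 with w
  ring

lemma Hblock_nonneg (μ : Measure Conf) [IsProbabilityMeasure μ] (n : ℕ) : 0 ≤ Hblock μ n := by
  rw [Hblock_eq_sum_negMulLog]
  exact div_nonneg (Finset.sum_nonneg fun w _ =>
    Real.negMulLog_nonneg measureReal_nonneg measureReal_le_one) (Real.log_nonneg one_le_two)

lemma Hblock_le (μ : Measure Conf) [IsProbabilityMeasure μ] (n : ℕ) : Hblock μ n ≤ n := by
  rw [Hblock_eq_sum_negMulLog, div_le_iff₀ (Real.log_pos one_lt_two)]
  calc ∑ w : Fin n → Bool, Real.negMulLog (μ.real (cylinder w))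
      ≤ Real.log (Fintype.card (Fin n → Bool)) :=
        sum_negMulLog_le_log_card (fun _ => measureReal_nonneg) (sum_measureReal_cylinder μ n)
    _ = n * Real.log 2 := by simp [Real.log_pow]

lemma entropy_mem_Icc (μ : Measure Conf) [IsProbabilityMeasure μ] : entropy μ ∈ Set.Icc 0 1 := by
  have hbound : ∀ n : ℕ, Hblock μ n / n ∈ Set.Icc (0 : ℝ) 1 := fun n =>
    ⟨div_nonneg (Hblock_nonneg μ n) n.cast_nonneg, div_le_one_of_le₀ (Hblock_le μ n) n.cast_nonneg⟩
  refine ⟨le_limsup_of_le (isBoundedUnder_of ⟨1, fun n => (hbound n).2⟩) fun b hb => ?_,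
    limsup_le_of_le (isCoboundedUnder_le_of_le atTop fun n => (hbound n).1)
      (.of_forall fun n => (hbound n).2)⟩
  obtain ⟨n, hn⟩ := hb.exists
  exact (hbound n).1.trans hn

lemma neg_inv_le_integral_phiX {X : Set Conf} {β : ℝ} (hβ : 0 < β) {μ ν : Measure Conf}
    (hμ : IsEquilibriumState (phiX X) β μ) (hν : IsInvProb ν) (hν₀ : ∫ y, phiX X y ∂ν = 0) :
    -β⁻¹ ≤ ∫ y, phiX X y ∂μ := by
  have := hμ.1.1
  have := hν.1
  have hvar := hμ.2 ν hν
  rw [hν₀, mul_zero, zero_add] at hvar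
  rw [show -β⁻¹ = -1 / β by ring, div_le_iff₀ hβ]
  linarith [(entropy_mem_Icc ν).1, (entropy_mem_Icc μ).2]

lemma tendsto_integral_phiX {X : Set Conf} {μ : ℝ → Measure Conf}
    (hμ : ∀ β, 0 < β → IsEquilibriumState (phiX X) β (μ β)) {ν : Measure Conf} (hν : IsInvProb ν)
    (hν₀ : ∫ y, phiX X y ∂ν = 0) :
    Tendsto (fun β => ∫ y, phiX X y ∂(μ β)) atTop (𝓝 0) := by
  have hlower : Tendsto (fun β : ℝ => -β⁻¹) atTop (𝓝 0) := by
    simpa using (tendsto_inv_atTop_zero (𝕜 := ℝ)).neg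
  refine tendsto_of_tendsto_of_tendsto_of_le_of_le' hlower tendsto_const_nhds ?_
    (.of_forall fun β => integral_nonpos (phiX_nonpos X))
  filter_upwards [eventually_gt_atTop 0] with β hβ
  exact neg_inv_le_integral_phiX hβ (hμ β hβ) hν hν₀

def invMeasuresOn (X : Set Conf) : Set (Measure Conf) := {ν | IsInvProb ν ∧ ν X = 1}

lemma integralFunctional_image_invMeasuresOn {X : Set Conf} (hcl : IsClosed X)
    (hne : X.Nonempty) :
    integralFunctional '' invMeasuresOn X =
      (Set.range fun ν : ProbabilityMeasure Conf => integralFunctional (ν : Measure Conf)) ∩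
        ({L | ∀ f, L (f.comp shiftMapCM) = L f} ∩ {L | L (phiXCM X) = 0}) := by
  ext L
  constructor
  · rintro ⟨ν, ⟨⟨hprob, hshift⟩, hX⟩, rfl⟩
    exact ⟨⟨⟨ν, hprob⟩, rfl⟩, (map_eq_self_iff_integralFunctional_comp ν shiftMapCM).1 hshift,
      (integral_phiX_eq_zero_iff hcl hne ν).2 hX⟩
  · rintro ⟨⟨ν, rfl⟩, hshift, hX⟩
    exact ⟨ν, ⟨⟨ν.prop, (map_eq_self_iff_integralFunctional_comp (ν : Measure Conf) _).2 hshift⟩,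
      (integral_phiX_eq_zero_iff hcl hne ν).1 hX⟩, rfl⟩

lemma isCompact_integralFunctional_image_invMeasuresOn {X : Set Conf} (hcl : IsClosed X)
    (hne : X.Nonempty) : IsCompact (integralFunctional '' invMeasuresOn X) := by
  rw [integralFunctional_image_invMeasuresOn hcl hne]
  exact isCompact_range_integralFunctional.inter_right <|
    (isClosed_setOf_forall_comp_eq _).inter (isClosed_eq (continuous_apply _) continuous_const)

lemma convex_integralFunctional_image_invMeasuresOn (X : Set Conf) :
    Convex ℝ (integralFunctional '' invMeasuresOn X) := by
  rintro _ ⟨ν₁, h₁, rfl⟩ _ ⟨ν₂, h₂, rfl⟩ a b ha hb hab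
  have := h₁.1.1
  have := h₂.1.1
  have hmass : ∀ s, ν₁ s = 1 → ν₂ s = 1 →
      (ENNReal.ofReal a • ν₁ + ENNReal.ofReal b • ν₂) s = 1 := fun s hs₁ hs₂ => by
    simp [hs₁, hs₂, ← ENNReal.ofReal_add ha hb, hab]
  refine ⟨ENNReal.ofReal a • ν₁ + ENNReal.ofReal b • ν₂,
    ⟨⟨⟨hmass _ measure_univ measure_univ⟩, ?_⟩, hmass X h₁.2 h₂.2⟩, ?_⟩
  · rw [Measure.map_add _ _ continuous_shiftMap.measurable, Measure.map_smul, Measure.map_smul,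
      h₁.1.2, h₂.1.2]
  · have := ν₁.smul_finite (ENNReal.ofReal_ne_top (r := a))
    have := ν₂.smul_finite (ENNReal.ofReal_ne_top (r := b))
    rw [integralFunctional_add, integralFunctional_smul, integralFunctional_smul,
      ENNReal.toReal_ofReal ha, ENNReal.toReal_ofReal hb]

open ProbabilityTheory in
lemma measure_smul_cond_add_measure_smul_cond_compl {Ω : Type*} [MeasurableSpace Ω]
    (ν : Measure Ω) [IsFiniteMeasure ν] {s : Set Ω} (hs : MeasurableSet s) :
    ν s • ν[|s] + ν sᶜ • ν[|sᶜ] = ν := by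
  ext t
  simp only [Measure.coe_add, Measure.coe_smul, Pi.add_apply, Pi.smul_apply, smul_eq_mul]
  rw [mul_comm, mul_comm (ν sᶜ)]
  exact cond_add_cond_compl_eq hs ν

open ProbabilityTheory in
lemma cond_mem_invMeasuresOn {X : Set Conf} (hX : MeasurableSet X) {ν : Measure Conf}
    (hν : ν ∈ invMeasuresOn X)
    {s : Set Conf} (hs : MeasurableSet s) (hinv : shiftMap ⁻¹' s = s) (hs₀ : ν s ≠ 0) :
    ν[|s] ∈ invMeasuresOn X := by
  have := hν.1.1
  have hpres : MeasurePreserving shiftMap (ν.restrict s) (ν.restrict s) := by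
    simpa only [hinv] using
      (MeasurePreserving.mk continuous_shiftMap.measurable hν.1.2).restrict_preimage hs
  refine ⟨⟨cond_isProbabilityMeasure hs₀, ?_⟩, ?_⟩
  · rw [ProbabilityTheory.cond, Measure.map_smul, hpres.map_eq]
  · rw [cond_apply hs, measure_inter_conull ((prob_compl_eq_zero_iff hX).2 hν.2),
      ENNReal.inv_mul_cancel hs₀ (measure_ne_top ν s)]

open ProbabilityTheory in
lemma isErgodicMeasure_of_mem_extremePoints {X : Set Conf} (hX : MeasurableSet X)
    {ν : Measure Conf} (hν : ν ∈ invMeasuresOn X)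
    (hext : integralFunctional ν ∈ (integralFunctional '' invMeasuresOn X).extremePoints ℝ) :
    IsErgodicMeasure ν := by
  have := hν.1.1
  intro s hs hinv
  by_contra! hs'
  obtain ⟨hs₀, hs₁⟩ := hs'
  have hsc₀ : ν sᶜ ≠ 0 := fun h => hs₁ ((prob_compl_eq_zero_iff hs).1 h)
  have := cond_isProbabilityMeasure hs₀
  have := cond_isProbabilityMeasure (μ := ν) hsc₀
  have hsegment : integralFunctional ν ∈
      openSegment ℝ (integralFunctional ν[|s]) (integralFunctional ν[|sᶜ]) := by
    refine ⟨(ν s).toReal, (ν sᶜ).toReal, ENNReal.toReal_pos hs₀ (measure_ne_top ν s),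
      ENNReal.toReal_pos hsc₀ (measure_ne_top ν sᶜ), ?_, ?_⟩
    · rw [← ENNReal.toReal_add (measure_ne_top ν s) (measure_ne_top ν sᶜ),
        measure_add_measure_compl hs, measure_univ, ENNReal.toReal_one]
    · have := (ν[|s]).smul_finite (measure_ne_top ν s)
      have := (ν[|sᶜ]).smul_finite (measure_ne_top ν sᶜ)
      rw [← integralFunctional_smul, ← integralFunctional_smul, ← integralFunctional_add,
        measure_smul_cond_add_measure_smul_cond_compl ν hs]
  have hcond : ν[|s] = ν := integralFunctional_inj.1 <| hext.2
    ⟨_, cond_mem_invMeasuresOn hX hν hs hinv hs₀, rfl⟩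
    ⟨_, cond_mem_invMeasuresOn hX hν hs.compl (by rw [Set.preimage_compl, hinv]) hsc₀, rfl⟩
    hsegment
  apply hsc₀
  rw [← hcond, cond_apply hs, Set.inter_compl_self, measure_empty, mul_zero]

lemma integralFunctional_image_invMeasuresOn_subset_segment {X : Set Conf} (hcl : IsClosed X)
    (hne : X.Nonempty) {μ' μ'' : Measure Conf}
    (honly : ∀ ν : Measure Conf, IsInvProb ν → IsErgodicMeasure ν → ν X = 1 →
      ν = μ' ∨ ν = μ'') :
    integralFunctional '' invMeasuresOn X ⊆
      segment ℝ (integralFunctional μ') (integralFunctional μ'') := by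
  set K := integralFunctional '' invMeasuresOn X
  have hext : K.extremePoints ℝ ⊆ {integralFunctional μ', integralFunctional μ''} := by
    intro L hL
    obtain ⟨ν, hν, rfl⟩ := hL.1
    rcases honly ν hν.1 (isErgodicMeasure_of_mem_extremePoints hcl.measurableSet hν hL) hν.2
      with rfl | rfl <;> simp
  calc K = closure (convexHull ℝ (K.extremePoints ℝ)) :=
        (closure_convexHull_extremePoints (isCompact_integralFunctional_image_invMeasuresOn hcl hne)
          (convex_integralFunctional_image_invMeasuresOn X)).symm
    _ ⊆ closure (convexHull ℝ {integralFunctional μ', integralFunctional μ''}) :=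
        closure_mono (convexHull_mono hext)
    _ = segment ℝ (integralFunctional μ') (integralFunctional μ'') := by
        rw [(Set.toFinite _).isClosed_convexHull (𝕜 := ℝ) |>.closure_eq, convexHull_pair]

lemma flip01_involutive : Function.Involutive flip01 :=
  fun x => funext fun n => Bool.not_not (x n)

lemma eq_half_add_half_of_map_flip01_eq {X : Set Conf} (hcl : IsClosed X) (hne : X.Nonempty)
    {μ' μ'' : Measure Conf} [IsProbabilityMeasure μ'] (hflip : μ'' = μ'.map flip01)
    (hμ' : μ' ≠ μ'')
    (honly : ∀ ν : Measure Conf, IsInvProb ν → IsErgodicMeasure ν → ν X = 1 →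
      ν = μ' ∨ ν = μ'')
    {ν : Measure Conf} (hν : ν ∈ invMeasuresOn X) (hνσ : ν.map flip01 = ν) :
    ν = ((1 : ℝ≥0∞) / 2) • μ' + ((1 : ℝ≥0∞) / 2) • μ'' := by
  have := hν.1.1
  have : IsProbabilityMeasure μ'' :=
    hflip ▸ Measure.isProbabilityMeasure_map continuous_flip01.aemeasurable
  have hflip' : μ''.map flip01 = μ' := by
    rw [hflip, Measure.map_map continuous_flip01.measurable continuous_flip01.measurable,
      flip01_involutive.comp_self, Measure.map_id]
  have hσ : ∀ (ρ : Measure Conf) f,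
      integralFunctional ρ (f.comp flip01CM) = integralFunctional (ρ.map flip01) f :=
    fun ρ f => (integralFunctional_map ρ flip01CM f).symm
  obtain ⟨a, b, -, -, hab, hcomb⟩ :=
    integralFunctional_image_invMeasuresOn_subset_segment hcl hne honly ⟨ν, hν, rfl⟩
  obtain ⟨f, hf⟩ : ∃ f, integralFunctional μ' f ≠ integralFunctional μ'' f :=
    Function.ne_iff.1 (mt integralFunctional_inj.1 hμ')
  -- Testing against `f` and `f ∘ σ`: the flip swaps `μ'` and `μ''` and fixes `ν`.
  have hcomb_f := congrFun hcomb f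
  have hcomb_σf := congrFun hcomb (f.comp flip01CM)
  simp only [Pi.add_apply, Pi.smul_apply, smul_eq_mul, hσ, ← hflip, hflip', hνσ] at hcomb_f hcomb_σf
  have hba : (a - b) * (integralFunctional μ' f - integralFunctional μ'' f) = 0 := by linarith
  have hab' : a = b := sub_eq_zero.1 ((mul_eq_zero.1 hba).resolve_right (sub_ne_zero.2 hf))
  have := μ'.smul_finite (c := 1 / 2) (by simp)
  have := μ''.smul_finite (c := 1 / 2) (by simp)
  apply integralFunctional_inj.1
  rw [← hcomb, integralFunctional_add, integralFunctional_smul, integralFunctional_smul,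
    show a = 1 / 2 by linarith, show b = 1 / 2 by linarith]
  norm_num

theorem stmt14_general (X : Set Conf) (hX : IsSubshift X)
    (μ' μ'' : Measure Conf)
    (h1 : IsInvProb μ' ∧ IsErgodicMeasure μ' ∧ μ' X = 1)
    (hflip : μ'' = μ'.map flip01) (hne : μ' ≠ μ'')
    (honly : ∀ ν : Measure Conf, IsInvProb ν → IsErgodicMeasure ν → ν X = 1 →
      ν = μ' ∨ ν = μ'')
    (μ : ℝ → Measure Conf)
    (hμ : ∀ β : ℝ, 0 < β →
      IsEquilibriumState (phiX X) β (μ β) ∧ (μ β).map flip01 = μ β) :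
    ∀ f : C(Conf, ℝ),
      Tendsto (fun β : ℝ => ∫ x, f x ∂(μ β)) atTop
        (𝓝 (∫ x, f x ∂(((1 : ℝ≥0∞) / 2) • μ' + ((1 : ℝ≥0∞) / 2) • μ''))) := by
  obtain ⟨hXne, hXcl, -⟩ := hX
  have := h1.1.1
  have hφ := tendsto_integral_phiX (fun β hβ => (hμ β hβ).1) h1.1
    ((integral_phiX_eq_zero_iff hXcl hXne μ').2 h1.2.2)
  suffices Tendsto (fun β => integralFunctional (μ β)) atTop
      (𝓝 (integralFunctional (((1 : ℝ≥0∞) / 2) • μ' + ((1 : ℝ≥0∞) / 2) • μ''))) from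
    tendsto_pi_nhds.1 this
  refine isCompact_range_integralFunctional.tendsto_nhds_of_unique_mapClusterPt ?_ ?_
  · filter_upwards [eventually_gt_atTop 0] with β hβ
    exact ⟨⟨μ β, (hμ β hβ).1.1.1⟩, rfl⟩
  rintro _ ⟨ν, rfl⟩ hν
  have hinvariant (T : C(Conf, Conf)) (hT : ∀ β > 0, (μ β).map T = μ β) :
      (ν : Measure Conf).map T = ν := by
    refine (map_eq_self_iff_integralFunctional_comp _ T).2 <|
      hν.mem_of_isClosed (isClosed_setOf_forall_comp_eq T) ?_
    filter_upwards [eventually_gt_atTop 0] with β hβ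
    have := (hμ β hβ).1.1.1
    exact (map_eq_self_iff_integralFunctional_comp _ T).1 (hT β hβ)
  have hνX : ∫ y, phiX X y ∂(ν : Measure Conf) = 0 :=
    (hν.continuousAt_comp (continuous_apply (phiXCM X)).continuousAt).eq_of_tendsto hφ
  exact congrArg _ <| eq_half_add_half_of_map_flip01_eq hXcl hXne hflip hne honly
    ⟨⟨ν.prop, hinvariant shiftMapCM fun β hβ => (hμ β hβ).1.1.2⟩,
      (integral_phiX_eq_zero_iff hXcl hXne ν).1 hνX⟩
    (hinvariant flip01CM fun β hβ => (hμ β hβ).2)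

/-- If `X` is a subshift invariant under the flip involution `σ`, whose
ergodic shift-invariant measures supported on `X` are exactly two measures `μ'` and
`μ'' = σ_* μ'` with `μ' ≠ μ''`, then every choice of `σ`-symmetric equilibrium states
`μ β` for `β φ_X` converges weak-* to `½μ' + ½μ''` as `β → +∞`. -/
theorem stmt14 (X : Set Conf) (hX : IsSubshift X) (hsym : flip01 '' X = X)
    (μ' μ'' : Measure Conf)
    (h1 : IsInvProb μ' ∧ IsErgodicMeasure μ' ∧ μ' X = 1)
    (h2 : IsInvProb μ'' ∧ IsErgodicMeasure μ'' ∧ μ'' X = 1)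
    (hflip : μ'' = μ'.map flip01) (hne : μ' ≠ μ'')
    (honly : ∀ ν : Measure Conf, IsInvProb ν → IsErgodicMeasure ν → ν X = 1 →
      ν = μ' ∨ ν = μ'')
    (μ : ℝ → Measure Conf)
    (hμ : ∀ β : ℝ, 0 < β →
      IsEquilibriumState (phiX X) β (μ β) ∧ (μ β).map flip01 = μ β) :
    ∀ f : C(Conf, ℝ),
      Tendsto (fun β : ℝ => ∫ x, f x ∂(μ β)) atTop
        (𝓝 (∫ x, f x ∂(((1 : ℝ≥0∞) / 2) • μ' + ((1 : ℝ≥0∞) / 2) • μ''))) :=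
  stmt14_general X hX μ' μ'' h1 hflip hne honly μ hμ

end
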